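/- Let S be a data independent, processor symmetric, and location symmetric memory system all of whose traces are causal. Suppose there is a simple witness Ω such that for all unambiguous traces τ of S(n,m) and all k with 1 ≤ k ≤ min{n,m}, the constraint graph G(Ω)(τ) does not have a canonical k-nice cycle. Then every trace of S(n,m) is sequentially consistent. -/

import Mathlib

/-- A memory operation: read or write. -/
inductive MemOp : Type
  | R : MemOp
  | W : MemOp
deriving DecidableEq

/-- A memory event ⟨op, proc, loc, data⟩. -/
structure MemEvent : Type where
  op : MemOp
  proc : ℕ
  loc : ℕ
  data : ℕ
deriving DecidableEq

instance : Inhabited MemEvent := ⟨⟨MemOp.R, 1, 1, 0⟩⟩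

/-- A trace is a finite sequence of memory events (1-indexed via `ev`). -/
abbrev MTrace := List MemEvent

/-- The x-th event of a trace (1-indexed). -/
def ev (τ : MTrace) (x : ℕ) : MemEvent := τ.getD (x - 1) default

/-- dom(τ) = {1, …, |τ|}. -/
def Dom (τ : MTrace) : Set ℕ := {x | 1 ≤ x ∧ x ≤ τ.length}

/-- P(τ,i): indices of events of processor i. -/
def Pset (τ : MTrace) (i : ℕ) : Set ℕ := {x | x ∈ Dom τ ∧ (ev τ x).proc = i}

/-- L(τ,j): indices of events to location j. -/
def Lset (τ : MTrace) (j : ℕ) : Set ℕ := {x | x ∈ Dom τ ∧ (ev τ x).loc = j}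

/-- L^w(τ,j): indices of write events to location j. -/
def Lw (τ : MTrace) (j : ℕ) : Set ℕ := {x | x ∈ Lset τ j ∧ (ev τ x).op = MemOp.W}

/-- L^r(τ,j): indices of read events to location j. -/
def Lr (τ : MTrace) (j : ℕ) : Set ℕ := {x | x ∈ Lset τ j ∧ (ev τ x).op = MemOp.R}

/-- A trace is unambiguous if every write event has a nonzero data value distinct
from that of every other write event to the same location. -/
def Unambiguous (τ : MTrace) : Prop :=
  ∀ j, ∀ x ∈ Lw τ j, (ev τ x).data ≠ 0 ∧
    ∀ y ∈ Lw τ j, y ≠ x → (ev τ y).data ≠ (ev τ x).data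

/-- A trace is causal if the data value of every read event is 0 or equals the data
value of some write event to the same location. -/
def Causal (τ : MTrace) : Prop :=
  ∀ j, ∀ x ∈ Lr τ j, (ev τ x).data = 0 ∨ ∃ y ∈ Lw τ j, (ev τ y).data = (ev τ x).data

/-- ⟨x,y⟩ ∈ M(τ,i): the total order on P(τ,i) given by index order. -/
def Mrel (τ : MTrace) (i : ℕ) (x y : ℕ) : Prop :=
  x ∈ Pset τ i ∧ y ∈ Pset τ i ∧ x < y

/-- A sequence of memory events (given by its length and 1-indexed access function)
is serial: each event's data value equals that of the latest write to the same
location at an index no larger than its own, and equals 0 if no such write exists. -/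
def SerialFn (len : ℕ) (e : ℕ → MemEvent) : Prop :=
  ∀ u, 1 ≤ u → u ≤ len →
    ((∀ k, 1 ≤ k → k ≤ u → ¬((e k).op = MemOp.W ∧ (e k).loc = (e u).loc)) →
       (e u).data = 0) ∧
    (∀ k, 1 ≤ k → k ≤ u → (e k).op = MemOp.W → (e k).loc = (e u).loc →
       (∀ k', k < k' → k' ≤ u → ¬((e k').op = MemOp.W ∧ (e k').loc = (e u).loc)) →
       (e u).data = (e k).data)

/-- f (with inverse g) is a permutation of {1,…,|τ|} satisfying conditions C1 and C2. -/
def IsSCWitness (τ : MTrace) (f g : ℕ → ℕ) : Prop :=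
  (∀ u ∈ Dom τ, f u ∈ Dom τ) ∧
  (∀ u ∈ Dom τ, g u ∈ Dom τ) ∧
  (∀ u ∈ Dom τ, g (f u) = u) ∧
  (∀ u ∈ Dom τ, f (g u) = u) ∧
  (∀ i u v, Mrel τ i u v → f u < f v) ∧
  SerialFn τ.length (fun x => ev τ (g x))

/-- A trace is sequentially consistent if some permutation satisfies C1 and C2. -/
def SeqConsistent (τ : MTrace) : Prop := ∃ f g, IsSCWitness τ f g

/-- A witness assigns to each trace and location a strict total order on L^w(τ,j). -/
def IsWitness (Ω : MTrace → ℕ → ℕ → ℕ → Prop) : Prop :=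
  ∀ τ j,
    (∀ x y, Ω τ j x y → x ∈ Lw τ j ∧ y ∈ Lw τ j) ∧
    (∀ x, ¬ Ω τ j x x) ∧
    (∀ x y z, Ω τ j x y → Ω τ j y z → Ω τ j x z) ∧
    (∀ x y, x ∈ Lw τ j → y ∈ Lw τ j → x ≠ y → Ω τ j x y ∨ Ω τ j y x)

/-- A witness is simple if it orders the writes to each location by index order. -/
def IsSimple (Ω : MTrace → ℕ → ℕ → ℕ → Prop) : Prop :=
  ∀ τ j x y, Ω τ j x y ↔ (x ∈ Lw τ j ∧ y ∈ Lw τ j ∧ x < y)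

/-- ⟨x,y⟩ ∈ Ω^e(τ,j): the extension of the witness order to all events to location j. -/
def OmegaE (Ω : MTrace → ℕ → ℕ → ℕ → Prop) (τ : MTrace) (j x y : ℕ) : Prop :=
  x ∈ Lset τ j ∧ y ∈ Lset τ j ∧
  (((ev τ x).data = (ev τ y).data ∧ (ev τ x).op = MemOp.W ∧ (ev τ y).op = MemOp.R) ∨
   ((ev τ x).data = 0 ∧ (ev τ y).data ≠ 0) ∨
   (∃ a b, a ∈ Lw τ j ∧ b ∈ Lw τ j ∧ Ω τ j a b ∧
      (ev τ a).data = (ev τ x).data ∧ (ev τ b).data = (ev τ y).data))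

/-- Edge of the constraint graph G(Ω)(τ): union of the M(τ,i) and the Ω^e(τ,j). -/
def GEdge (Ω : MTrace → ℕ → ℕ → ℕ → Prop) (τ : MTrace) (x y : ℕ) : Prop :=
  (∃ i, Mrel τ i x y) ∨ (∃ j, OmegaE Ω τ j x y)

/-- The constraint graph G(Ω)(τ) has a cycle. -/
def HasCycle (Ω : MTrace → ℕ → ℕ → ℕ → Prop) (τ : MTrace) : Prop :=
  ∃ x, Relation.TransGen (GEdge Ω τ) x x

/-- The constraint graph G(Ω)(τ) is acyclic. -/
def Acyclic (Ω : MTrace → ℕ → ℕ → ℕ → Prop) (τ : MTrace) : Prop :=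
  ¬ HasCycle Ω τ

/-- All events of the trace have processor in {1,…,n} and location in {1,…,m}. -/
def InRange (n m : ℕ) (τ : MTrace) : Prop :=
  ∀ e ∈ τ, 1 ≤ e.proc ∧ e.proc ≤ n ∧ 1 ≤ e.loc ∧ e.loc ≤ m

/-- All data values in the trace lie in {0,…,v}. -/
def DataBounded (v : ℕ) (τ : MTrace) : Prop := ∀ e ∈ τ, e.data ≤ v

/-- A memory system with n processors and m locations: for each v ≥ 1, a set S(n,m,v)
of traces whose processors, locations, and data values are in range. -/
structure MemSystem (n m : ℕ) : Type where
  S : ℕ → Set MTrace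
  wf : ∀ v, 1 ≤ v → ∀ τ ∈ S v, InRange n m τ ∧ DataBounded v τ

/-- S(n,m): the union of the S(n,m,v) over v ≥ 1. -/
def MemSystem.traces {n m : ℕ} (M : MemSystem n m) : Set MTrace :=
  {τ | ∃ v, 1 ≤ v ∧ τ ∈ M.S v}

/-- A renaming function λ with λ(j,0) = 0 for every location j. -/
def IsRenaming (lam : ℕ → ℕ → ℕ) : Prop := ∀ j, lam j 0 = 0

/-- λ^d: rename the data value of each event according to its location. -/
def renameD (lam : ℕ → ℕ → ℕ) (τ : MTrace) : MTrace :=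
  τ.map fun e => { e with data := lam e.loc e.data }

/-- The memory system is data independent: a trace is in S(n,m,v) iff it is obtained
from an unambiguous trace of S(n,m) by a renaming function with values in {0,…,v}. -/
def DataIndependent {n m : ℕ} (M : MemSystem n m) : Prop :=
  ∀ v, 1 ≤ v → ∀ τ, τ ∈ M.S v ↔
    ∃ τ' lam, τ' ∈ M.traces ∧ Unambiguous τ' ∧ IsRenaming lam ∧
      (∀ j d, lam j d ≤ v) ∧ τ = renameD lam τ'

/-- λ^p: rename the processor of each event. -/
def renameP (lam : ℕ → ℕ) (τ : MTrace) : MTrace :=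
  τ.map fun e => { e with proc := lam e.proc }

/-- λ^l: rename the location of each event. -/
def renameL (lam : ℕ → ℕ) (τ : MTrace) : MTrace :=
  τ.map fun e => { e with loc := lam e.loc }

/-- λ is a permutation of {1,…,n}. -/
def PermOn (n : ℕ) (lam : ℕ → ℕ) : Prop :=
  Set.BijOn lam (Set.Icc 1 n) (Set.Icc 1 n)

/-- The memory system is processor symmetric. -/
def ProcSymmetric {n m : ℕ} (M : MemSystem n m) : Prop :=
  ∀ lam, PermOn n lam → ∀ v τ, τ ∈ M.S v → renameP lam τ ∈ M.S v

/-- The memory system is location symmetric. -/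
def LocSymmetric {n m : ℕ} (M : MemSystem n m) : Prop :=
  ∀ lam, PermOn m lam → ∀ v τ, τ ∈ M.S v → renameL lam τ ∈ M.S v

/-- x ⊕ 1 in the cyclic group {1,…,k} with identity k. -/
def cyc (k x : ℕ) : ℕ := if x = k then 1 else x + 1

/-- A k-nice cycle u_1,v_1,…,u_k,v_k in G(Ω)(τ): distinct vertices; each ⟨u_x,v_x⟩
is a processor edge, each ⟨v_x,u_{x⊕1}⟩ a location edge; no processor (resp.
location) contributes two edges. -/
def NiceCycle (Ω : MTrace → ℕ → ℕ → ℕ → Prop) (τ : MTrace) (k : ℕ)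
    (u v : ℕ → ℕ) : Prop :=
  1 ≤ k ∧
  (∀ x ∈ Set.Icc 1 k, ∀ y ∈ Set.Icc 1 k, x ≠ y → u x ≠ u y) ∧
  (∀ x ∈ Set.Icc 1 k, ∀ y ∈ Set.Icc 1 k, x ≠ y → v x ≠ v y) ∧
  (∀ x ∈ Set.Icc 1 k, ∀ y ∈ Set.Icc 1 k, u x ≠ v y) ∧
  (∀ x ∈ Set.Icc 1 k, ∃ i, Mrel τ i (u x) (v x)) ∧
  (∀ x ∈ Set.Icc 1 k, ∃ j, OmegaE Ω τ j (v x) (u (cyc k x))) ∧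
  (∀ x ∈ Set.Icc 1 k, ∀ y ∈ Set.Icc 1 k, x ≠ y → ∀ i,
     Mrel τ i (u x) (v x) → ¬ Mrel τ i (u y) (v y)) ∧
  (∀ x ∈ Set.Icc 1 k, ∀ y ∈ Set.Icc 1 k, x ≠ y → ∀ j,
     OmegaE Ω τ j (v x) (u (cyc k x)) → ¬ OmegaE Ω τ j (v y) (u (cyc k y)))

/-- A canonical k-nice cycle: a k-nice cycle whose processor edges are in M(τ,x) and
whose location edges are in Ω^e(τ,x⊕1), for x = 1,…,k. -/
def CanonicalNiceCycle (Ω : MTrace → ℕ → ℕ → ℕ → Prop) (τ : MTrace) (k : ℕ)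
    (u v : ℕ → ℕ) : Prop :=
  NiceCycle Ω τ k u v ∧
  (∀ x ∈ Set.Icc 1 k, Mrel τ x (u x) (v x)) ∧
  (∀ x ∈ Set.Icc 1 k, OmegaE Ω τ (cyc k x) (v x) (u (cyc k x)))

/-- The trace satisfies the automaton Constrain_k(j). -/
def ConstrainK (k j : ℕ) (τ : MTrace) : Prop :=
  (j ≤ k →
    (∀ x ∈ Lw τ j, (ev τ x).data ≤ 2) ∧
    (∀ x ∈ Lw τ j, ∀ y ∈ Lw τ j, (ev τ x).data = 1 → (ev τ y).data = 1 → x = y) ∧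
    (∀ x ∈ Lw τ j, ∀ y ∈ Lw τ j, (ev τ x).data = 0 → (ev τ y).data ≠ 0 → x < y) ∧
    (∀ y ∈ Lw τ j, (ev τ y).data = 2 → ∃ x ∈ Lw τ j, (ev τ x).data = 1 ∧ x < y)) ∧
  (k < j → ∀ x ∈ Lw τ j, (ev τ x).data = 0)

/-- The trace satisfies the automaton Check_k(i). -/
def CheckK (k i : ℕ) (τ : MTrace) : Prop :=
  ∃ x ∈ Dom τ, ∃ y ∈ Dom τ, x < y ∧
    (ev τ x).proc = i ∧ (ev τ x).loc = i ∧
    ((ev τ x).data = 1 ∨ (ev τ x).data = 2) ∧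
    (ev τ y).proc = i ∧ (ev τ y).loc = cyc k i ∧
    ((ev τ y).data = 0 ∨ ((ev τ y).op = MemOp.W ∧ (ev τ y).data = 1))

/-!
By data independence every trace of `S(n,m)` is a data renaming of an unambiguous trace of
`S(n,m)`, and data renamings (which fix `0`) preserve sequential consistency, so it suffices to
treat an unambiguous causal trace `τ`.

If `G(Ω)(τ)` is acyclic, numbering the events along a linear extension of it gives the required
permutation: for a simple witness, each read then comes after the write it reads from and before
every write to its location that follows that write in index order.

If `G(Ω)(τ)` has a cycle, take a shortest one. Each `M(τ,i)` and, for a simple witness, each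
`Ω^e(τ,j)` is an interval order (the strict order of a key), so two consecutive edges of the same
kind, or two edges of one processor or one location, would yield a chord and hence a shorter
cycle. The cycle is therefore `k`-nice with `k ≤ min n m`, and permuting processors and locations
along it (processor and location symmetry) turns it into a canonical `k`-nice cycle of an
unambiguous trace of `S(n,m)`, which is excluded.
-/

lemma cyc_mem {k x : ℕ} (hx : x ∈ Set.Icc 1 k) : cyc k x ∈ Set.Icc 1 k := by
  simp only [Set.mem_Icc, cyc] at *
  split <;> omega

lemma cyc_injOn (k : ℕ) : Set.InjOn (cyc k) (Set.Icc 1 k) := by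
  intro x hx y hy h
  simp only [Set.mem_Icc, cyc] at *
  split at h <;> split at h <;> omega

section ClosedWalk

variable {α : Type*} {r : α → α → Prop} {t : ℕ} {c : ℕ → α}

/-- `c` runs around a closed walk of length `t` in `r` forever. -/
structure IsClosedWalk (r : α → α → Prop) (t : ℕ) (c : ℕ → α) : Prop where
  pos : 0 < t
  periodic : Function.Periodic c t
  rel : ∀ i, r (c i) (c (i + 1))

structure IsShortestClosedWalk (r : α → α → Prop) (t : ℕ) (c : ℕ → α) : Prop
    extends IsClosedWalk r t c where
  le : ∀ t' c', IsClosedWalk r t' c' → t ≤ t'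

lemma isClosedWalk_of_path {s : ℕ} {p : ℕ → α} (hs : 0 < s)
    (hp : ∀ i, i + 1 < s → r (p i) (p (i + 1))) (hclose : r (p (s - 1)) (p 0)) :
    IsClosedWalk r s (fun i => p (i % s)) := by
  refine ⟨hs, fun i => by simp, fun i => ?_⟩
  have hi := Nat.mod_lt i hs
  rcases Nat.lt_or_ge (i % s + 1) s with h | h
  · have h1 : 1 % s = 1 := Nat.mod_eq_of_lt (by omega)
    rw [Nat.add_mod_of_add_mod_lt (by omega), h1]
    exact hp _ h
  · have h0 : (i + 1) % s = 0 := by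
      rw [Nat.add_mod, show i % s = s - 1 by omega]
      rcases Nat.lt_or_ge 1 s with h1 | h1
      · rw [Nat.mod_eq_of_lt h1, Nat.sub_add_cancel hs, Nat.mod_self]
      · simp [show s = 1 by omega]
    rw [h0, show i % s = s - 1 by omega]
    exact hclose

lemma exists_path_of_transGen {x y : α} (h : Relation.TransGen r x y) :
    ∃ s, 0 < s ∧ ∃ p : ℕ → α, p 0 = x ∧ p s = y ∧ ∀ i < s, r (p i) (p (i + 1)) := by
  induction h using Relation.TransGen.head_induction_on with
  | single hxy => exact ⟨1, one_pos, fun i => if i = 0 then _ else _, rfl, rfl, by simpa⟩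
  | @head a b hab _ ih =>
    obtain ⟨s, hs, p, rfl, rfl, hp⟩ := ih
    refine ⟨s + 1, by omega, fun i => if i = 0 then a else p (i - 1), rfl, by simp, ?_⟩
    rintro (_ | i) hi
    · simpa using hab
    · simpa using hp i (by omega)

lemma exists_isClosedWalk_of_transGen {x : α} (h : Relation.TransGen r x x) :
    ∃ t c, IsClosedWalk r t c := by
  obtain ⟨s, hs, p, hp0, hps, hp⟩ := exists_path_of_transGen h
  refine ⟨s, _, isClosedWalk_of_path hs (fun i hi => hp i (by omega)) ?_⟩
  simpa [hp0, ← hps, Nat.sub_add_cancel hs] using hp (s - 1) (by omega)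

lemma exists_isShortestClosedWalk (h : ∃ t c, IsClosedWalk r t c) :
    ∃ t c, IsShortestClosedWalk r t c := by
  classical
  obtain ⟨c, hc⟩ := Nat.find_spec h
  exact ⟨_, c, hc, fun t' c' hc' => Nat.find_min' h ⟨c', hc'⟩⟩

lemma IsClosedWalk.shortcut (h : IsClosedWalk r t c) {a d : ℕ} (hd : d ≤ t)
    (hchord : r (c a) (c (a + d))) :
    IsClosedWalk r (t - d + 1) (fun i => c (a + d + i % (t - d + 1))) := by
  refine isClosedWalk_of_path (p := fun i => c (a + d + i)) (by omega)
    (fun i _ => h.rel (a + d + i)) ?_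
  show r (c (a + d + (t - d + 1 - 1))) (c (a + d + 0))
  rwa [show a + d + (t - d + 1 - 1) = a + t by omega, h.periodic a, Nat.add_zero]

namespace IsShortestClosedWalk

lemma not_rel (h : IsShortestClosedWalk r t c) {a b : ℕ}
    (hab : a + 2 ≤ b ∧ b ≤ a + t ∨ b ≤ a ∧ a + 2 ≤ b + t) : ¬ r (c a) (c b) := by
  intro hr
  obtain ⟨d, hd, hbd⟩ : ∃ d, 2 ≤ d ∧ d ≤ t ∧ c b = c (a + d) := by
    rcases hab with hab | hab
    · exact ⟨b - a, by omega, by omega, by rw [Nat.add_sub_cancel' (by omega)]⟩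
    · exact ⟨b + t - a, by omega, by omega, by rw [Nat.add_sub_cancel' (by omega), h.periodic]⟩
  have := h.le _ _ (h.shortcut hbd.1 (hbd.2 ▸ hr))
  omega

lemma apply_ne (h : IsShortestClosedWalk r t c) {a b : ℕ} (hab : a < b) (hb : b < a + t) :
    c a ≠ c b := by
  intro heq
  have hr := h.rel (b - 1)
  rw [Nat.sub_add_cancel (by omega), ← heq, ← h.periodic a] at hr
  exact h.not_rel (Or.inl ⟨by omega, by omega⟩) hr

end IsShortestClosedWalk

end ClosedWalk

section AlternatingCycle

variable {α ι κ : Type*}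

/-- A family of interval orders (irreflexive relations with the Ferrers property), each living on
its own block: two edges meeting at a vertex come from the same member. -/
structure IsIntervalOrderFamily (P : ι → α → α → Prop) : Prop where
  irrefl : ∀ i x, ¬ P i x x
  ferrers : ∀ {i a b c d}, P i a b → P i c d → P i a d ∨ P i c b
  index_eq : ∀ {i j x y z}, P i x y → P j y z → i = j

lemma IsIntervalOrderFamily.trans {P : ι → α → α → Prop} (hP : IsIntervalOrderFamily P)
    {i : ι} {x y z : α} (hxy : P i x y) (hyz : P i y z) : P i x z :=
  (hP.ferrers hxy hyz).resolve_right (hP.irrefl i y)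

lemma isIntervalOrderFamily_of_key {β : Type*} [LinearOrder β] (A : ι → Set α)
    (hA : ∀ i j x, x ∈ A i → x ∈ A j → i = j) (key : α → β) :
    IsIntervalOrderFamily (fun i x y => x ∈ A i ∧ y ∈ A i ∧ key x < key y) where
  irrefl _ _ h := lt_irrefl _ h.2.2
  ferrers {_ _ _ _ _} h₁ h₂ := by
    by_contra! h
    exact lt_irrefl _
      (((h₁.2.2.trans_le (h.2 h₂.1 h₁.2.1)).trans h₂.2.2).trans_le (h.1 h₁.1 h₂.2.1))
  index_eq h₁ h₂ := hA _ _ _ h₁.2.1 h₂.1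

/-- `u₁ → v₁ ⇢ u₂ → v₂ ⇢ ⋯ → v_k ⇢ u₁`, the solid arrows in `P (p x)`, the dashed ones in
`Q (l x)`. -/
structure IsAlternatingCycle (P : ι → α → α → Prop) (Q : κ → α → α → Prop) (k : ℕ)
    (u v : ℕ → α) (p : ℕ → ι) (l : ℕ → κ) : Prop where
  one_le : 1 ≤ k
  injOn_u : Set.InjOn u (Set.Icc 1 k)
  injOn_v : Set.InjOn v (Set.Icc 1 k)
  u_ne_v : ∀ x ∈ Set.Icc 1 k, ∀ y ∈ Set.Icc 1 k, u x ≠ v y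
  injOn_p : Set.InjOn p (Set.Icc 1 k)
  injOn_l : Set.InjOn l (Set.Icc 1 k)
  rel_P : ∀ x ∈ Set.Icc 1 k, P (p x) (u x) (v x)
  rel_Q : ∀ x ∈ Set.Icc 1 k, Q (l x) (v x) (u (cyc k x))

variable {P : ι → α → α → Prop} {Q : κ → α → α → Prop} {t : ℕ} {c : ℕ → α}

/-- On a shortest closed walk in `P ∪ Q`, two consecutive `P`-edges would compose to a chord, and
so would two consecutive `Q`-edges. -/
lemma IsShortestClosedWalk.exists_alternating
    (hc : IsShortestClosedWalk (fun a b => (∃ i, P i a b) ∨ ∃ j, Q j a b) t c)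
    (hP : IsIntervalOrderFamily P) (hQ : IsIntervalOrderFamily Q) :
    ∃ k o, t = 2 * k ∧ (∀ s, ∃ i, P i (c (o + 2 * s)) (c (o + 2 * s + 1))) ∧
      ∀ s, ∃ j, Q j (c (o + 2 * s + 1)) (c (o + 2 * s + 2)) := by
  have ht : 2 ≤ t := by
    by_contra ht
    have := hc.pos
    have h01 := hc.rel 0
    rw [show 0 + 1 = 0 + t by omega, hc.periodic] at h01
    rcases h01 with ⟨i, h⟩ | ⟨j, h⟩
    exacts [hP.irrefl i _ h, hQ.irrefl j _ h]
  have hchord : ∀ a, ¬ (∃ i, P i (c a) (c (a + 1 + 1))) ∧ ¬ ∃ j, Q j (c a) (c (a + 1 + 1)) :=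
    fun a => not_or.mp (hc.not_rel (Or.inl ⟨le_rfl, by omega⟩))
  have hsucc : ∀ a, (∃ i, P i (c (a + 1)) (c (a + 1 + 1))) ↔ ¬ ∃ i, P i (c a) (c (a + 1)) := by
    intro a
    constructor
    · rintro ⟨i', h'⟩ ⟨i, h⟩
      exact (hchord a).1 ⟨i, hP.trans h (hP.index_eq h h' ▸ h')⟩
    · intro hn
      by_contra hn'
      obtain ⟨j, h⟩ := (hc.rel a).resolve_left hn
      obtain ⟨j', h'⟩ := (hc.rel (a + 1)).resolve_left hn'
      exact (hchord a).2 ⟨j, hQ.trans h (hQ.index_eq h h' ▸ h')⟩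
  have hshift : ∀ s a, (∃ i, P i (c (a + 2 * s)) (c (a + 2 * s + 1))) ↔
      ∃ i, P i (c a) (c (a + 1)) := by
    intro s
    induction s with
    | zero => simp
    | succ s ih =>
      intro a
      rw [← ih a, show a + 2 * (s + 1) = a + 2 * s + 1 + 1 by omega, hsucc, hsucc, not_not]
  obtain ⟨k, hk⟩ : Even t := by
    refine Nat.not_odd_iff_even.mp fun ⟨k, hk⟩ => ?_
    have h := hsucc (0 + 2 * k)
    rw [hshift, show 0 + 2 * k + 1 = t by omega, show t + 1 = 1 + t by omega, hc.periodic.eq,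
      hc.periodic 1, zero_add] at h
    exact iff_not_self h
  obtain ⟨o, ho⟩ : ∃ o, ∃ i, P i (c o) (c (o + 1)) := by
    by_cases h : ∃ i, P i (c 0) (c (0 + 1))
    exacts [⟨0, h⟩, ⟨0 + 1, (hsucc 0).mpr h⟩]
  refine ⟨k, o, by omega, fun s => (hshift s o).mpr ho, fun s => ?_⟩
  have hn : ¬ ∃ i, P i (c (o + 2 * s + 1)) (c (o + 2 * s + 1 + 1)) :=
    fun h => (hsucc _).mp h ((hshift s o).mpr ho)
  exact (hc.rel (o + 2 * s + 1)).resolve_left hn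

/-- Take a shortest cycle: two of its edges from one member of a family would, by the Ferrers
property, give a chord. -/
theorem exists_isAlternatingCycle (hP : IsIntervalOrderFamily P) (hQ : IsIntervalOrderFamily Q)
    {x : α} (hx : Relation.TransGen (fun a b => (∃ i, P i a b) ∨ ∃ j, Q j a b) x x) :
    ∃ k u v p l, IsAlternatingCycle P Q k u v p l := by
  obtain ⟨t, c, hc⟩ := exists_isShortestClosedWalk (exists_isClosedWalk_of_transGen hx)
  obtain ⟨k, o, rfl, hPe, hQe⟩ := hc.exists_alternating hP hQ
  choose p hp using hPe
  choose l hl using hQe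
  have hk := hc.pos
  have hchord : ∀ x ∈ Set.Icc 1 k, ∀ y ∈ Set.Icc 1 k, x ≠ y → ∀ e,
      ¬ ((∃ i, P i (c (o + 2 * x + e)) (c (o + 2 * y + e + 1))) ∨
        ∃ j, Q j (c (o + 2 * x + e)) (c (o + 2 * y + e + 1))) := by
    intro x hx y hy hxy e
    simp only [Set.mem_Icc] at hx hy
    exact hc.not_rel (by omega)
  have hne : ∀ a b, a ≠ b → a < b + 2 * k → b < a + 2 * k → c a ≠ c b := by
    intro a b hab ha hb
    rcases Nat.lt_or_gt_of_ne hab with h | h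
    exacts [hc.apply_ne h hb, (hc.apply_ne h ha).symm]
  refine ⟨k, fun x => c (o + 2 * x), fun x => c (o + 2 * x + 1), p, l,
    ⟨by omega, ?_, ?_, ?_, ?_, ?_, fun x _ => hp x, fun x hx => ?_⟩⟩
  · rintro x ⟨hx1, hxk⟩ y ⟨hy1, hyk⟩ h
    by_contra hxy
    exact hne _ _ (by omega) (by omega) (by omega) h
  · rintro x ⟨hx1, hxk⟩ y ⟨hy1, hyk⟩ h
    by_contra hxy
    exact hne _ _ (by omega) (by omega) (by omega) h
  · rintro x ⟨hx1, hxk⟩ y ⟨hy1, hyk⟩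
    exact hne _ _ (by omega) (by omega) (by omega)
  · intro x hx y hy h
    by_contra hxy
    rcases hP.ferrers (hp x) (h ▸ hp y) with h' | h'
    exacts [hchord x hx y hy hxy 0 (.inl ⟨_, h'⟩), hchord y hy x hx (Ne.symm hxy) 0 (.inl ⟨_, h'⟩)]
  · intro x hx y hy h
    by_contra hxy
    rcases hQ.ferrers (hl x) (h ▸ hl y) with h' | h'
    exacts [hchord x hx y hy hxy 1 (.inr ⟨_, h'⟩), hchord y hy x hx (Ne.symm hxy) 1 (.inr ⟨_, h'⟩)]
  · have : c (o + 2 * x + 2) = c (o + 2 * cyc k x) := by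
      simp only [Set.mem_Icc] at hx
      unfold cyc
      split
      · rw [show o + 2 * x + 2 = o + 2 * 1 + 2 * k by omega, hc.periodic]
      · rw [show o + 2 * (x + 1) = o + 2 * x + 2 by omega]
    exact this ▸ hl x

end AlternatingCycle

section Traces

variable {τ : MTrace}

lemma ev_mem {x : ℕ} (hx : x ∈ Dom τ) : ev τ x ∈ τ := by
  simp [ev, List.getD_eq_getElem?_getD, show x - 1 < τ.length by grind [Dom]]

lemma dom_map (h : MemEvent → MemEvent) : Dom (τ.map h) = Dom τ := by
  simp [Dom]

lemma ev_map (h : MemEvent → MemEvent) {x : ℕ} (hx : x ∈ Dom τ) : ev (τ.map h) x = h (ev τ x) := by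
  simp [ev, List.getD_eq_getElem?_getD, show x - 1 < τ.length by grind [Dom]]

lemma InRange.proc_mem {n m : ℕ} (h : InRange n m τ) {x : ℕ} (hx : x ∈ Dom τ) :
    (ev τ x).proc ∈ Set.Icc 1 n :=
  ⟨(h _ (ev_mem hx)).1, (h _ (ev_mem hx)).2.1⟩

lemma InRange.loc_mem {n m : ℕ} (h : InRange n m τ) {x : ℕ} (hx : x ∈ Dom τ) :
    (ev τ x).loc ∈ Set.Icc 1 m :=
  ⟨(h _ (ev_mem hx)).2.2.1, (h _ (ev_mem hx)).2.2.2⟩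

lemma Unambiguous.eq_of_data_eq (hU : Unambiguous τ) {j w w' : ℕ} (hw : w ∈ Lw τ j)
    (hw' : w' ∈ Lw τ j) (hd : (ev τ w).data = (ev τ w').data) : w = w' := by
  by_contra hne
  exact (hU j w' hw').2 w hw hne hd

lemma Causal.exists_write (hC : Causal τ) {j x : ℕ} (hx : x ∈ Lset τ j)
    (hd : (ev τ x).data ≠ 0) : ∃ w ∈ Lw τ j, (ev τ w).data = (ev τ x).data := by
  cases hop : (ev τ x).op with
  | W => exact ⟨x, ⟨hx, hop⟩, rfl⟩
  | R => exact (hC j x ⟨hx, hop⟩).resolve_left hd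

end Traces

section ConstraintGraph

variable {Ω : MTrace → ℕ → ℕ → ℕ → Prop} {τ : MTrace}

lemma gedge_dom {x y : ℕ} (h : GEdge Ω τ x y) : x ∈ Dom τ ∧ y ∈ Dom τ := by
  rcases h with ⟨_, h⟩ | ⟨_, h⟩
  exacts [⟨h.1.1, h.2.1.1⟩, ⟨h.1.1, h.2.1.1⟩]

lemma isIntervalOrderFamily_mrel (τ : MTrace) : IsIntervalOrderFamily (Mrel τ) :=
  isIntervalOrderFamily_of_key (Pset τ) (fun _ _ _ hi hj => hi.2.symm.trans hj.2) id

/-- The write that `x` reads from (or is); it is `sInf ∅ = 0` when `x` reads the initial value. -/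
noncomputable def sourceWrite (τ : MTrace) (x : ℕ) : ℕ :=
  sInf {w | w ∈ Lw τ (ev τ x).loc ∧ (ev τ w).data = (ev τ x).data}

/-- For a simple witness, `Ω^e(τ, j)` is the order of this key on `L(τ, j)`: writes in index
order, each read just after the write it reads from, and reads of `0` first. -/
noncomputable def omegaKey (τ : MTrace) (x : ℕ) : ℕ :=
  2 * sourceWrite τ x + if (ev τ x).op = MemOp.R then 1 else 0

lemma sourceWrite_eq (hU : Unambiguous τ) {j x w : ℕ} (hx : x ∈ Lset τ j) (hw : w ∈ Lw τ j)
    (hd : (ev τ w).data = (ev τ x).data) : sourceWrite τ x = w := by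
  rw [← hx.2] at hw
  have hmem := Nat.sInf_mem (s := {w | w ∈ Lw τ (ev τ x).loc ∧ (ev τ w).data = (ev τ x).data})
    ⟨w, hw, hd⟩
  exact hU.eq_of_data_eq hmem.1 hw (hmem.2.trans hd.symm)

lemma sourceWrite_of_data_eq_zero (hU : Unambiguous τ) {x : ℕ} (hd : (ev τ x).data = 0) :
    sourceWrite τ x = 0 := by
  have : {w | w ∈ Lw τ (ev τ x).loc ∧ (ev τ w).data = (ev τ x).data} = ∅ :=
    Set.eq_empty_of_forall_notMem fun w hw => (hU _ w hw.1).1 (hw.2.trans hd)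
  rw [sourceWrite, this, Nat.sInf_empty]

lemma omegaKey_of_write {x : ℕ} (h : (ev τ x).op = MemOp.W) :
    omegaKey τ x = 2 * sourceWrite τ x := by
  simp [omegaKey, h]

lemma omegaKey_of_read {x : ℕ} (h : (ev τ x).op = MemOp.R) :
    omegaKey τ x = 2 * sourceWrite τ x + 1 := by
  simp [omegaKey, h]

lemma omegaKey_bounds (x : ℕ) :
    2 * sourceWrite τ x ≤ omegaKey τ x ∧ omegaKey τ x ≤ 2 * sourceWrite τ x + 1 := by
  unfold omegaKey
  split <;> omega

lemma omegaKey_lt_of_omegaE (hΩ : IsSimple Ω) (hU : Unambiguous τ) (hC : Causal τ) {j x y : ℕ}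
    (h : OmegaE Ω τ j x y) : omegaKey τ x < omegaKey τ y := by
  obtain ⟨hx, hy, ⟨hd, hxW, hyR⟩ | ⟨hx0, hy0⟩ | ⟨a, b, ha, hb, hab, hda, hdb⟩⟩ := h
  · have hxw : x ∈ Lw τ j := ⟨hx, hxW⟩
    rw [omegaKey_of_write hxW, omegaKey_of_read hyR, sourceWrite_eq hU hx hxw rfl,
      sourceWrite_eq hU hy hxw hd]
    omega
  · obtain ⟨w, hw, hdw⟩ := hC.exists_write hy hy0
    have hxR : (ev τ x).op = MemOp.R := by
      cases hop : (ev τ x).op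
      · rfl
      · exact absurd hx0 (hU j x ⟨hx, hop⟩).1
    have hky := (omegaKey_bounds (τ := τ) y).1
    rw [sourceWrite_eq hU hy hw hdw] at hky
    rw [omegaKey_of_read hxR, sourceWrite_of_data_eq_zero hU hx0]
    have := hw.1.1.1
    omega
  · have hlt := ((hΩ τ j a b).mp hab).2.2
    have hkx := (omegaKey_bounds (τ := τ) x).2
    have hky := (omegaKey_bounds (τ := τ) y).1
    rw [sourceWrite_eq hU hx ha hda] at hkx
    rw [sourceWrite_eq hU hy hb hdb] at hky
    omega

lemma omegaE_of_omegaKey_lt (hΩ : IsSimple Ω) (hU : Unambiguous τ) (hC : Causal τ) {j x y : ℕ}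
    (hx : x ∈ Lset τ j) (hy : y ∈ Lset τ j) (hlt : omegaKey τ x < omegaKey τ y) :
    OmegaE Ω τ j x y := by
  refine ⟨hx, hy, ?_⟩
  have hkx := omegaKey_bounds (τ := τ) x
  have hky := omegaKey_bounds (τ := τ) y
  by_cases hdy : (ev τ y).data = 0
  · exfalso
    rw [sourceWrite_of_data_eq_zero hU hdy] at hky
    cases hop : (ev τ x).op
    · rw [omegaKey_of_read hop] at hlt
      omega
    · rw [omegaKey_of_write hop, sourceWrite_eq hU hx ⟨hx, hop⟩ rfl] at hlt
      have := hx.1.1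
      omega
  by_cases hdx : (ev τ x).data = 0
  · exact .inr (.inl ⟨hdx, hdy⟩)
  obtain ⟨wx, hwx, hdwx⟩ := hC.exists_write hx hdx
  obtain ⟨wy, hwy, hdwy⟩ := hC.exists_write hy hdy
  rw [sourceWrite_eq hU hx hwx hdwx] at hkx
  rw [sourceWrite_eq hU hy hwy hdwy] at hky
  rcases lt_trichotomy wx wy with h | rfl | h
  · exact .inr (.inr ⟨wx, wy, hwx, hwy, (hΩ τ j wx wy).mpr ⟨hwx, hwy, h⟩, hdwx, hdwy⟩)
  · refine .inl ⟨hdwx.symm.trans hdwy, ?_⟩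
    cases hopx : (ev τ x).op <;> cases hopy : (ev τ y).op <;>
      simp only [omegaKey_of_read, omegaKey_of_write, hopx, hopy, sourceWrite_eq hU hx hwx hdwx,
        sourceWrite_eq hU hy hwx hdwy] at hlt <;> first | omega | exact ⟨rfl, rfl⟩
  · omega

lemma omegaE_iff (hΩ : IsSimple Ω) (hU : Unambiguous τ) (hC : Causal τ) (j x y : ℕ) :
    OmegaE Ω τ j x y ↔ x ∈ Lset τ j ∧ y ∈ Lset τ j ∧ omegaKey τ x < omegaKey τ y :=
  ⟨fun h => ⟨h.1, h.2.1, omegaKey_lt_of_omegaE hΩ hU hC h⟩,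
    fun h => omegaE_of_omegaKey_lt hΩ hU hC h.1 h.2.1 h.2.2⟩

lemma isIntervalOrderFamily_omegaE (hΩ : IsSimple Ω) (hU : Unambiguous τ) (hC : Causal τ) :
    IsIntervalOrderFamily (OmegaE Ω τ) := by
  have : OmegaE Ω τ = fun j x y => x ∈ Lset τ j ∧ y ∈ Lset τ j ∧ omegaKey τ x < omegaKey τ y := by
    ext j x y
    exact omegaE_iff hΩ hU hC j x y
  rw [this]
  exact isIntervalOrderFamily_of_key (Lset τ) (fun _ _ _ hi hj => hi.2.symm.trans hj.2) _

end ConstraintGraph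

section TopologicalNumbering

variable {α : Type*}

/-- Number the elements of `s` by `1, …, #s` along a linear extension of the reachability order
of `r`: each `x` gets the number of elements of `s` up to it. -/
lemma exists_bijOn_Icc_of_acyclic {r : α → α → Prop} (hr : ∀ x, ¬ Relation.TransGen r x x)
    (s : Finset α) :
    ∃ f : α → ℕ, Set.BijOn f s (Set.Icc 1 s.card) ∧ ∀ x ∈ s, ∀ y ∈ s, r x y → f x < f y := by
  classical
  have : IsPartialOrder α (Relation.ReflTransGen r) :=
    { refl := fun _ => .refl
      trans := fun _ _ _ => .trans
      antisymm := fun x y hxy hyx => by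
        rcases Relation.reflTransGen_iff_eq_or_transGen.mp hxy with rfl | hxy
        · rfl
        · exact absurd (hxy.trans_left hyx) (hr x) }
  obtain ⟨le, hle, hsub⟩ := extend_partialOrder (Relation.ReflTransGen r)
  let f x := (s.filter (le · x)).card
  have hlt : ∀ x y, y ∈ s → le x y → x ≠ y → f x < f y := by
    intro x y hy hxy hne
    refine Finset.card_lt_card (Finset.ssubset_iff_of_subset ?_ |>.mpr ⟨y, ?_, ?_⟩)
    · intro z hz
      simp only [Finset.mem_filter] at hz ⊢
      exact ⟨hz.1, _root_.trans hz.2 hxy⟩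
    · simpa using ⟨hy, refl y⟩
    · simpa using fun _ hyx => hne (antisymm hxy hyx)
  have hinj : Set.InjOn f s := by
    intro x hx y hy hfxy
    by_contra hne
    rcases total_of le x y with h | h
    exacts [(hlt x y hy h hne).ne hfxy, (hlt y x hx h (Ne.symm hne)).ne' hfxy]
  have hmaps : Set.MapsTo f s (Set.Icc 1 s.card) := fun x hx =>
    ⟨Finset.card_pos.mpr ⟨x, by simpa using ⟨hx, refl x⟩⟩, Finset.card_filter_le _ _⟩
  refine ⟨f, ⟨hmaps, hinj, ?_⟩, fun x _ y hy hxy => hlt x y hy (hsub _ _ (.single hxy)) ?_⟩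
  · simpa using Finset.surjOn_of_injOn_of_card_le (t := Finset.Icc 1 s.card) f
      (by simpa using hmaps) hinj (by simp)
  · rintro rfl
    exact hr x (.single hxy)

end TopologicalNumbering

section SequentialConsistency

variable {Ω : MTrace → ℕ → ℕ → ℕ → Prop} {τ : MTrace}

lemma initial_or_source_of_monotone (hΩ : IsSimple Ω) (hU : Unambiguous τ) (hC : Causal τ)
    {f : ℕ → ℕ} (hf : ∀ x y, GEdge Ω τ x y → f x < f y) {j z : ℕ} (hz : z ∈ Lset τ j) :
    ((ev τ z).data = 0 ∧ ∀ w ∈ Lw τ j, f z < f w) ∨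
      ∃ w ∈ Lw τ j, (ev τ w).data = (ev τ z).data ∧ f w ≤ f z ∧
        ∀ w' ∈ Lw τ j, w' ≠ w → f w' < f w ∨ f z < f w' := by
  by_cases hd : (ev τ z).data = 0
  · exact .inl ⟨hd, fun w hw => hf _ _ (.inr ⟨j, hz, hw.1, .inr (.inl ⟨hd, (hU j w hw).1⟩)⟩)⟩
  obtain ⟨w, hw, hdw⟩ := hC.exists_write hz hd
  refine .inr ⟨w, hw, hdw, ?_, fun w' hw' hne => ?_⟩
  · cases hop : (ev τ z).op
    · exact (hf _ _ (.inr ⟨j, hw.1, hz, .inl ⟨hdw, hw.2, hop⟩⟩)).le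
    · rw [hU.eq_of_data_eq hw ⟨hz, hop⟩ hdw]
  · rcases Nat.lt_or_gt_of_ne hne with h | h
    · have hΩ' := (hΩ τ j w' w).mpr ⟨hw', hw, h⟩
      exact .inl (hf _ _ (.inr ⟨j, hw'.1, hw.1, .inr (.inr ⟨w', w, hw', hw, hΩ', rfl, rfl⟩)⟩))
    · have hΩ' := (hΩ τ j w w').mpr ⟨hw, hw', h⟩
      exact .inr (hf _ _ (.inr ⟨j, hz, hw'.1, .inr (.inr ⟨w, w', hw, hw', hΩ', hdw, rfl⟩)⟩))

lemma serialFn_of_monotone (hΩ : IsSimple Ω) (hU : Unambiguous τ) (hC : Causal τ)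
    {f g : ℕ → ℕ} (hf : Set.MapsTo f (Dom τ) (Dom τ)) (hg : Set.MapsTo g (Dom τ) (Dom τ))
    (hfg : Set.InvOn g f (Dom τ) (Dom τ)) (hmono : ∀ x y, GEdge Ω τ x y → f x < f y) :
    SerialFn τ.length (fun x => ev τ (g x)) := by
  intro u hu1 hu2
  have hu : u ∈ Dom τ := ⟨hu1, hu2⟩
  have hpos : ∀ k, 1 ≤ k → k ≤ u → g k ∈ Dom τ ∧ f (g k) = k := fun k hk1 hku =>
    ⟨hg ⟨hk1, hku.trans hu2⟩, hfg.2 ⟨hk1, hku.trans hu2⟩⟩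
  rcases initial_or_source_of_monotone hΩ hU hC hmono (j := (ev τ (g u)).loc) ⟨hg hu, rfl⟩ with
    ⟨hd, hlate⟩ | ⟨w, hw, hdw, hwu, hlast⟩
  · refine ⟨fun _ => hd, fun k hk1 hku hkW hkloc _ =>
      absurd (hlate (g k) ⟨⟨(hpos k hk1 hku).1, hkloc⟩, hkW⟩) ?_⟩
    rw [(hpos k hk1 hku).2, (hpos u hu1 le_rfl).2]
    omega
  · rw [(hpos u hu1 le_rfl).2] at hwu
    have hfw : f w ∈ Dom τ ∧ g (f w) = w := ⟨hf hw.1.1, hfg.1 hw.1.1⟩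
    have hwW : (ev τ (g (f w))).op = MemOp.W ∧ (ev τ (g (f w))).loc = (ev τ (g u)).loc := by
      rw [hfw.2]
      exact ⟨hw.2, hw.1.2⟩
    refine ⟨fun hnone => absurd hwW (hnone (f w) hfw.1.1 hwu), fun k hk1 hku hkW hkloc hnone => ?_⟩
    by_cases hkw : g k = w
    · simp only [hkw, hdw]
    · rcases hlast (g k) ⟨⟨(hpos k hk1 hku).1, hkloc⟩, hkW⟩ hkw with h | h
      · rw [(hpos k hk1 hku).2] at h
        exact absurd hwW (hnone (f w) h hwu)
      · rw [(hpos k hk1 hku).2, (hpos u hu1 le_rfl).2] at h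
        omega

theorem seqConsistent_of_acyclic (hΩ : IsSimple Ω) (hU : Unambiguous τ) (hC : Causal τ)
    (hA : Acyclic Ω τ) : SeqConsistent τ := by
  obtain ⟨f, hf, hmono⟩ :=
    exists_bijOn_Icc_of_acyclic (fun x hx => hA ⟨x, hx⟩) (Finset.Icc 1 τ.length)
  rw [Finset.coe_Icc, Nat.card_Icc, Nat.add_sub_cancel] at hf
  have hinv := hf.invOn_invFunOn
  have hg := (hf.symm hinv.symm).mapsTo
  have hmono' : ∀ x y, GEdge Ω τ x y → f x < f y := fun x y h =>
    hmono x (Finset.mem_Icc.mpr (gedge_dom h).1) y (Finset.mem_Icc.mpr (gedge_dom h).2) h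
  exact ⟨f, Function.invFunOn f (Dom τ), hf.mapsTo, hg, hinv.1, hinv.2,
    fun i u v h => hmono' u v (.inl ⟨i, h⟩), serialFn_of_monotone hΩ hU hC hf.mapsTo hg hinv hmono'⟩

end SequentialConsistency

section Renaming

variable {τ : MTrace}

lemma ev_renameD {lam : ℕ → ℕ → ℕ} (hlam : IsRenaming lam) {x : ℕ} :
    ev (renameD lam τ) x = {ev τ x with data := lam (ev τ x).loc (ev τ x).data} := by
  simp only [ev, renameD, List.getD_eq_getElem?_getD, List.getElem?_map]
  cases τ[x - 1]? <;> simp [default, hlam 1]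

lemma SerialFn.map_data {len : ℕ} {e : ℕ → MemEvent} (h : SerialFn len e) {lam : ℕ → ℕ → ℕ}
    (hlam : IsRenaming lam) :
    SerialFn len (fun x => {e x with data := lam (e x).loc (e x).data}) := by
  intro u hu1 hu2
  obtain ⟨hinit, hlast⟩ := h u hu1 hu2
  refine ⟨fun hnone => ?_, fun k hk1 hku hkW hkloc hnone => ?_⟩
  · show lam (e u).loc (e u).data = 0
    rw [hinit hnone, hlam]
  · show lam (e u).loc (e u).data = lam (e k).loc (e k).data
    rw [hlast k hk1 hku hkW hkloc hnone, hkloc]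

theorem seqConsistent_renameD {lam : ℕ → ℕ → ℕ} (hlam : IsRenaming lam) (h : SeqConsistent τ) :
    SeqConsistent (renameD lam τ) := by
  obtain ⟨f, g, hf, hg, hgf, hfg, hM, hS⟩ := h
  have hdom : Dom (renameD lam τ) = Dom τ := dom_map _
  have hmrel : ∀ i u v, Mrel (renameD lam τ) i u v → Mrel τ i u v := by
    simp only [Mrel, Pset, hdom, ev_renameD hlam, imp_self, implies_true]
  refine ⟨f, g, hdom ▸ hf, hdom ▸ hg, hdom ▸ hgf, hdom ▸ hfg,
    fun i u v h => hM i u v (hmrel i u v h), ?_⟩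
  have hlen : (renameD lam τ).length = τ.length := List.length_map _
  simp only [hlen, ev_renameD hlam]
  exact hS.map_data hlam

variable {π σ : ℕ → ℕ}

lemma dom_renameL_renameP : Dom (renameL σ (renameP π τ)) = Dom τ := by
  rw [renameL, renameP, dom_map, dom_map]

lemma ev_renameL_renameP {x : ℕ} (hx : x ∈ Dom τ) :
    ev (renameL σ (renameP π τ)) x =
      {ev τ x with proc := π (ev τ x).proc, loc := σ (ev τ x).loc} := by
  rw [renameL, ev_map _ (by rwa [renameP, dom_map]), renameP, ev_map _ hx]

lemma Mrel.renameL_renameP {i x y : ℕ} (h : Mrel τ i x y) :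
    Mrel (renameL σ (renameP π τ)) (π i) x y := by
  obtain ⟨⟨hx, hxi⟩, ⟨hy, hyi⟩, hxy⟩ := h
  refine ⟨⟨by rwa [dom_renameL_renameP], ?_⟩, ⟨by rwa [dom_renameL_renameP], ?_⟩, hxy⟩ <;>
    simp [ev_renameL_renameP, hx, hy, hxi, hyi]

lemma mem_Lw_renameL_renameP {j x : ℕ} (h : x ∈ Lw τ j) :
    x ∈ Lw (renameL σ (renameP π τ)) (σ j) := by
  obtain ⟨⟨hx, hxj⟩, hxW⟩ := h
  refine ⟨⟨by rwa [dom_renameL_renameP], ?_⟩, ?_⟩ <;> simp [ev_renameL_renameP, hx, hxj, hxW]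

lemma OmegaE.renameL_renameP {Ω : MTrace → ℕ → ℕ → ℕ → Prop} (hΩ : IsSimple Ω) {j x y : ℕ}
    (h : OmegaE Ω τ j x y) : OmegaE Ω (renameL σ (renameP π τ)) (σ j) x y := by
  obtain ⟨⟨hx, hxj⟩, ⟨hy, hyj⟩, hcase⟩ := h
  refine ⟨⟨by rwa [dom_renameL_renameP], by simp [ev_renameL_renameP, hx, hxj]⟩,
    ⟨by rwa [dom_renameL_renameP], by simp [ev_renameL_renameP, hy, hyj]⟩, ?_⟩
  simp only [ev_renameL_renameP hx, ev_renameL_renameP hy]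
  rcases hcase with h | h | ⟨a, b, ha, hb, hab, hda, hdb⟩
  · exact .inl h
  · exact .inr (.inl h)
  · have ha' := mem_Lw_renameL_renameP (π := π) (σ := σ) ha
    have hb' := mem_Lw_renameL_renameP (π := π) (σ := σ) hb
    have hab' := (hΩ _ _ a b).mpr ⟨ha', hb', ((hΩ τ j a b).mp hab).2.2⟩
    refine .inr (.inr ⟨a, b, ha', hb', hab', ?_, ?_⟩)
    · simpa [ev_renameL_renameP ha.1.1] using hda
    · simpa [ev_renameL_renameP hb.1.1] using hdb

lemma Unambiguous.renameL_renameP (hU : Unambiguous τ) {n m : ℕ} (hτ : InRange n m τ)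
    (hσ : Set.InjOn σ (Set.Icc 1 m)) : Unambiguous (renameL σ (renameP π τ)) := by
  have hw : ∀ {j x}, x ∈ Lw (renameL σ (renameP π τ)) j →
      x ∈ Lw τ (ev τ x).loc ∧ σ (ev τ x).loc = j := fun {j x} ⟨⟨hx, hxj⟩, hxW⟩ => by
    rw [dom_renameL_renameP] at hx
    simp only [ev_renameL_renameP hx] at hxj hxW
    exact ⟨⟨⟨hx, rfl⟩, hxW⟩, hxj⟩
  intro j x hx
  obtain ⟨hxw, hxj⟩ := hw hx
  refine ⟨by simpa [ev_renameL_renameP hxw.1.1] using (hU _ x hxw).1, fun y hy hne => ?_⟩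
  obtain ⟨hyw, hyj⟩ := hw hy
  have hloc := hσ (hτ.loc_mem hyw.1.1) (hτ.loc_mem hxw.1.1) (hyj.trans hxj.symm)
  simpa [ev_renameL_renameP hxw.1.1, ev_renameL_renameP hyw.1.1] using
    (hU _ x hxw).2 y (hloc ▸ hyw) hne

end Renaming

lemma exists_bijOn_extending {α β : Type*} {s : Set α} {T : Set β} (hs : s.Finite) (hT : T.Finite)
    {a b : α → β} (ha : Set.MapsTo a s T) (ha' : Set.InjOn a s) (hb : Set.MapsTo b s T)
    (hb' : Set.InjOn b s) : ∃ π : β → β, Set.BijOn π T T ∧ ∀ x ∈ s, π (a x) = b x := by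
  classical
  have := hs.to_subtype
  obtain ⟨e, he⟩ := Equiv.Perm.exists_extending_pair (fun x : s => (⟨a x, ha x.2⟩ : T))
    (fun x : s => (⟨b x, hb x.2⟩ : T))
    (fun x y h => Subtype.ext (ha' x.2 y.2 (congrArg Subtype.val h)))
    (fun x y h => Subtype.ext (hb' x.2 y.2 (congrArg Subtype.val h)))
  refine ⟨Equiv.Perm.ofSubtype e, (hT.injOn_iff_bijOn_of_mapsTo fun y hy => ?_).mp
    (Equiv.injective _).injOn, fun x hx => ?_⟩
  · exact (Equiv.Perm.ofSubtype_apply_mem_iff_mem e y).mpr hy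
  · rw [Equiv.Perm.ofSubtype_apply_of_mem e (ha hx)]
    exact congrArg Subtype.val (he ⟨x, hx⟩)

lemma le_of_injOn_Icc {k n : ℕ} {p : ℕ → ℕ} (hp : Set.MapsTo p (Set.Icc 1 k) (Set.Icc 1 n))
    (hp' : Set.InjOn p (Set.Icc 1 k)) : k ≤ n := by
  simpa using Finset.card_le_card_of_injOn p (s := Finset.Icc 1 k) (t := Finset.Icc 1 n)
    (by simpa using hp) (by simpa using hp')

section CanonicalCycle

variable {Ω : MTrace → ℕ → ℕ → ℕ → Prop} {τ : MTrace}

/-- With the canonical labelling, no processor or location can carry two edges of the cycle, since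
an edge of `M(τ, i)` or `Ω^e(τ, j)` determines `i` or `j`. -/
lemma canonicalNiceCycle_of_edges {k : ℕ} {u v : ℕ → ℕ} (hk : 1 ≤ k)
    (hu : Set.InjOn u (Set.Icc 1 k)) (hv : Set.InjOn v (Set.Icc 1 k))
    (huv : ∀ x ∈ Set.Icc 1 k, ∀ y ∈ Set.Icc 1 k, u x ≠ v y)
    (hM : ∀ x ∈ Set.Icc 1 k, Mrel τ x (u x) (v x))
    (hO : ∀ x ∈ Set.Icc 1 k, OmegaE Ω τ (cyc k x) (v x) (u (cyc k x))) :
    CanonicalNiceCycle Ω τ k u v := by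
  refine ⟨⟨hk, fun x hx y hy hne h => hne (hu hx hy h), fun x hx y hy hne h => hne (hv hx hy h),
    huv, fun x hx => ⟨x, hM x hx⟩, fun x hx => ⟨_, hO x hx⟩, ?_, ?_⟩, hM, hO⟩
  · intro x hx y hy hne i hix hiy
    exact hne ((hM x hx).1.2.symm.trans (hix.1.2.trans (hiy.1.2.symm.trans (hM y hy).1.2)))
  · intro x hx y hy hne j hjx hjy
    exact hne (cyc_injOn k hx hy
      ((hO x hx).1.2.symm.trans (hjx.1.2.trans (hjy.1.2.symm.trans (hO y hy).1.2))))

lemma IsAlternatingCycle.canonicalNiceCycle_renameL_renameP {k : ℕ} {u v p l π σ : ℕ → ℕ}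
    (h : IsAlternatingCycle (Mrel τ) (OmegaE Ω τ) k u v p l) (hΩ : IsSimple Ω)
    (hπ : ∀ x ∈ Set.Icc 1 k, π (p x) = x) (hσ : ∀ x ∈ Set.Icc 1 k, σ (l x) = cyc k x) :
    CanonicalNiceCycle Ω (renameL σ (renameP π τ)) k u v :=
  canonicalNiceCycle_of_edges h.one_le h.injOn_u h.injOn_v h.u_ne_v
    (fun x hx => by simpa only [hπ x hx] using (h.rel_P x hx).renameL_renameP (π := π) (σ := σ))
    (fun x hx => by simpa only [hσ x hx] using (h.rel_Q x hx).renameL_renameP (π := π) (σ := σ) hΩ)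

theorem exists_canonicalNiceCycle_of_hasCycle {n m : ℕ} {M : MemSystem n m}
    (hP : ProcSymmetric M) (hL : LocSymmetric M) (hΩ : IsSimple Ω) (hτ : τ ∈ M.traces)
    (hU : Unambiguous τ) (hC : Causal τ) (hcyc : HasCycle Ω τ) :
    ∃ τ' ∈ M.traces, Unambiguous τ' ∧
      ∃ k, 1 ≤ k ∧ k ≤ min n m ∧ ∃ u w, CanonicalNiceCycle Ω τ' k u w := by
  obtain ⟨v, hv, hτ⟩ := hτ
  have hR := (M.wf v hv τ hτ).1
  obtain ⟨x, hx⟩ := hcyc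
  obtain ⟨k, u, w, p, l, h⟩ := exists_isAlternatingCycle (isIntervalOrderFamily_mrel τ)
    (isIntervalOrderFamily_omegaE hΩ hU hC) hx
  have hp : Set.MapsTo p (Set.Icc 1 k) (Set.Icc 1 n) := fun x hx =>
    (h.rel_P x hx).1.2 ▸ hR.proc_mem (h.rel_P x hx).1.1
  have hl : Set.MapsTo l (Set.Icc 1 k) (Set.Icc 1 m) := fun x hx =>
    (h.rel_Q x hx).1.2 ▸ hR.loc_mem (h.rel_Q x hx).1.1
  have hkn := le_of_injOn_Icc hp h.injOn_p
  have hkm := le_of_injOn_Icc hl h.injOn_l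
  obtain ⟨π, hπ, hπp⟩ := exists_bijOn_extending (Set.finite_Icc 1 k) (Set.finite_Icc 1 n) hp
    h.injOn_p (fun x hx => ⟨hx.1, hx.2.trans hkn⟩) (Set.injOn_id _)
  obtain ⟨σ, hσ, hσl⟩ := exists_bijOn_extending (Set.finite_Icc 1 k) (Set.finite_Icc 1 m) hl
    h.injOn_l (fun x hx => ⟨(cyc_mem hx).1, (cyc_mem hx).2.trans hkm⟩) (cyc_injOn k)
  exact ⟨_, ⟨v, hv, hL σ hσ v _ (hP π hπ v τ hτ)⟩, hU.renameL_renameP hR hσ.injOn, k, h.one_le,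
    le_min hkn hkm, u, w, h.canonicalNiceCycle_renameL_renameP hΩ hπp hσl⟩

end CanonicalCycle

theorem no_canonical_nice_cycle_implies_sc_general
    (n m : ℕ)
    (M : MemSystem n m) (hDI : DataIndependent M)
    (hP : ProcSymmetric M) (hL : LocSymmetric M)
    (hC : ∀ τ ∈ M.traces, Causal τ)
    (hW : ∃ Ω, IsWitness Ω ∧ IsSimple Ω ∧
      ∀ τ ∈ M.traces, Unambiguous τ →
        ∀ k, 1 ≤ k → k ≤ min n m → ∀ u w, ¬ CanonicalNiceCycle Ω τ k u w) :
    ∀ τ ∈ M.traces, SeqConsistent τ := by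
  obtain ⟨Ω, -, hΩ, hnone⟩ := hW
  rintro τ ⟨v, hv, hτ⟩
  obtain ⟨τ', lam, hτ', hU, hlam, -, rfl⟩ := (hDI v hv τ).mp hτ
  refine seqConsistent_renameD hlam (seqConsistent_of_acyclic hΩ hU (hC τ' hτ') fun hcyc => ?_)
  obtain ⟨τ'', hτ'', hU'', k, hk1, hk, u, w, hcan⟩ :=
    exists_canonicalNiceCycle_of_hasCycle hP hL hΩ hτ' hU (hC τ' hτ') hcyc
  exact hnone τ'' hτ'' hU'' k hk1 hk u w hcan

/-- For a data independent, processor symmetric, and location symmetric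
memory system all of whose traces are causal: if there is a simple witness Ω such
that no unambiguous trace of S(n,m) has a canonical k-nice cycle for any
1 ≤ k ≤ min{n,m}, then every trace of S(n,m) is sequentially consistent. -/
theorem no_canonical_nice_cycle_implies_sc
    (n m : ℕ) (hn : 1 ≤ n) (hm : 1 ≤ m)
    (M : MemSystem n m) (hDI : DataIndependent M)
    (hP : ProcSymmetric M) (hL : LocSymmetric M)
    (hC : ∀ τ ∈ M.traces, Causal τ)
    (hW : ∃ Ω, IsWitness Ω ∧ IsSimple Ω ∧
      ∀ τ ∈ M.traces, Unambiguous τ →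
        ∀ k, 1 ≤ k → k ≤ min n m → ∀ u w, ¬ CanonicalNiceCycle Ω τ k u w) :
    ∀ τ ∈ M.traces, SeqConsistent τ :=
  no_canonical_nice_cycle_implies_sc_general n m M hDI hP hL hC hW
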